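/- Let (L, ∘_λ, [·_λ ·]) be a transposed Poisson conformal superalgebra. Then for all homogeneous h, x, y, z ∈ L the following identity holds: (−1)^{|x||z|} [h_λ x] ∘_{λ+γ} [y_{μ−γ} z] + (−1)^{|x||y|} [h_λ y] ∘_{λ+μ−γ} [z_{−∂−γ} x] + (−1)^{|y||z|} [h_λ z] ∘_{−∂−μ} [x_γ y] = 0. -/

import Mathlib

open Polynomial
open scoped TensorProduct

noncomputable section

namespace TPCSAFormal

/-- The super-sign `(-1)^{i·j}` for parities `i, j ∈ ℤ/2ℤ`. -/
def sgn (i j : ZMod 2) : ℂ := (-1 : ℂ) ^ (i.val * j.val)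

variable (L : Type*) [AddCommGroup L] [Module ℂ L]
  [Module (Polynomial ℂ) L] [IsScalarTower ℂ (Polynomial ℂ) L]

/-- A conformal `λ`-product on the `ℂ[∂]`-module `L`, recorded by its family of `n`-th
product coefficients: `a ∘_λ b = ∑_n λ^n • coeff n a b`, with finitely many nonzero terms.
This is exactly the data of a `ℂ`-bilinear map `L ⊗ L → ℂ[λ] ⊗ L`. -/
structure ConformalProduct where
  coeff : ℕ → L →ₗ[ℂ] L →ₗ[ℂ] L
  coeff_finite : ∀ a b : L, ∃ N : ℕ, ∀ n : ℕ, N ≤ n → coeff n a b = 0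

variable {L}

/-- The value `a ∘_λ b` of the `λ`-product at `λ ∈ ℂ`.  Since `ℂ` is infinite, identities
between such values for all `λ` are equivalent to the corresponding polynomial identities. -/
def ConformalProduct.mul (m : ConformalProduct L) (lam : ℂ) (a b : L) : L :=
  ∑ᶠ n : ℕ, lam ^ n • m.coeff n a b

/-- The value `a ∘_{-∂-λ} b`, where `∂` acts on `L` as scalar multiplication by
`X ∈ ℂ[∂]` (the variable `λ` being replaced by the operator `-∂-λ`). -/
def ConformalProduct.cmul (m : ConformalProduct L) (lam : ℂ) (a b : L) : L :=
  ∑ᶠ n : ℕ, ((-((X : Polynomial ℂ) + C lam)) ^ n) • m.coeff n a b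

variable (L) in
/-- A `ℤ₂`-grading on `L` making it a `ℤ₂`-graded `ℂ[∂]`-module: `L = L₀ ⊕ L₁` with
`∂ L_i ⊆ L_i`, where `∂` acts as multiplication by `X ∈ ℂ[∂]`. -/
structure SuperModule where
  grade : ZMod 2 → Submodule ℂ L
  isInternal : DirectSum.IsInternal grade
  X_smul_mem : ∀ (i : ZMod 2) (a : L), a ∈ grade i → (X : Polynomial ℂ) • a ∈ grade i

/-- `m` is an even `λ`-product on the `ℤ₂`-graded `ℂ[∂]`-module `(L, S)`:
it is even with respect to the grading and conformally sesquilinear. -/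
structure IsLambdaProduct (S : SuperModule L) (m : ConformalProduct L) : Prop where
  even : ∀ (i j : ZMod 2) (a b : L), a ∈ S.grade i → b ∈ S.grade j →
    ∀ n : ℕ, m.coeff n a b ∈ S.grade (i + j)
  sesq_left : ∀ (lam : ℂ) (a b : L),
    m.mul lam ((X : Polynomial ℂ) • a) b = (-lam) • m.mul lam a b
  sesq_right : ∀ (lam : ℂ) (a b : L),
    m.mul lam a ((X : Polynomial ℂ) • b) =
      (X : Polynomial ℂ) • m.mul lam a b + lam • m.mul lam a b

/-- `(L, S, m)` is a commutative associative conformal superalgebra. -/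
structure IsCommAssoc (S : SuperModule L) (m : ConformalProduct L)
    extends IsLambdaProduct S m : Prop where
  comm : ∀ (i j : ZMod 2) (a b : L), a ∈ S.grade i → b ∈ S.grade j →
    ∀ lam : ℂ, m.mul lam a b = sgn i j • m.cmul lam b a
  assoc : ∀ (lam mu : ℂ) (a b c : L),
    m.mul lam a (m.mul mu b c) = m.mul (lam + mu) (m.mul lam a b) c

/-- `(L, S, br)` is a Lie conformal superalgebra. -/
structure IsLie (S : SuperModule L) (br : ConformalProduct L)
    extends IsLambdaProduct S br : Prop where
  skew : ∀ (i j : ZMod 2) (a b : L), a ∈ S.grade i → b ∈ S.grade j →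
    ∀ lam : ℂ, br.mul lam a b = -(sgn i j • br.cmul lam b a)
  jacobi : ∀ (i j : ZMod 2) (a b : L), a ∈ S.grade i → b ∈ S.grade j →
    ∀ (c : L) (lam mu : ℂ),
      br.mul lam a (br.mul mu b c) =
        br.mul (lam + mu) (br.mul lam a b) c + sgn i j • br.mul mu b (br.mul lam a c)

/-- `(L, S, m, br)` is a transposed Poisson conformal superalgebra. -/
structure IsTPCSA (S : SuperModule L) (m br : ConformalProduct L) : Prop where
  commAssoc : IsCommAssoc S m
  lie : IsLie S br
  transposedLeibniz : ∀ (i j : ZMod 2) (a b : L), a ∈ S.grade i → b ∈ S.grade j →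
    ∀ (c : L) (lam mu : ℂ),
      (2 : ℂ) • m.mul lam a (br.mul mu b c) =
        br.mul (lam + mu) (m.mul lam a b) c + sgn i j • br.mul mu b (m.mul lam a c)

/-- `(L, S, m, br)` is a Poisson conformal superalgebra. -/
structure IsPCSA (S : SuperModule L) (m br : ConformalProduct L) : Prop where
  commAssoc : IsCommAssoc S m
  lie : IsLie S br
  leibniz : ∀ (i j : ZMod 2) (a b : L), a ∈ S.grade i → b ∈ S.grade j →
    ∀ (c : L) (lam mu : ℂ),
      br.mul lam a (m.mul mu b c) =
        m.mul (lam + mu) (br.mul lam a b) c + sgn i j • m.mul mu b (br.mul lam a c)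

/-- `(L, S, br, α)` is a Hom-Lie conformal superalgebra. -/
structure IsHomLie (S : SuperModule L) (br : ConformalProduct L) (α : L → L)
    extends IsLambdaProduct S br : Prop where
  map_smul_add : ∀ (c : ℂ) (a b : L), α (c • a + b) = c • α a + α b
  map_grade : ∀ (i : ZMod 2) (a : L), a ∈ S.grade i → α a ∈ S.grade i
  commute_partial : ∀ a : L, α ((X : Polynomial ℂ) • a) = (X : Polynomial ℂ) • α a
  skew : ∀ (i j : ZMod 2) (a b : L), a ∈ S.grade i → b ∈ S.grade j →
    ∀ lam : ℂ, br.mul lam a b = -(sgn i j • br.cmul lam b a)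
  homJacobi : ∀ (i j : ZMod 2) (a b : L), a ∈ S.grade i → b ∈ S.grade j →
    ∀ (c : L) (lam mu : ℂ),
      br.mul lam (α a) (br.mul mu b c) =
        br.mul (lam + mu) (br.mul lam a b) (α c) + sgn i j • br.mul mu (α b) (br.mul lam a c)

/-- `(L, S, p)` is a left-symmetric conformal superalgebra. -/
structure IsLeftSymmetric (S : SuperModule L) (p : ConformalProduct L)
    extends IsLambdaProduct S p : Prop where
  leftSym : ∀ (i j : ZMod 2) (a b : L), a ∈ S.grade i → b ∈ S.grade j →
    ∀ (c : L) (lam mu : ℂ),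
      p.mul (lam + mu) (p.mul lam a b) c - p.mul lam a (p.mul mu b c) =
        sgn i j • (p.mul (lam + mu) (p.mul mu b a) c - p.mul mu b (p.mul lam a c))

/-- `(L, S, p)` is a (left) Novikov conformal superalgebra. -/
structure IsNovikov (S : SuperModule L) (p : ConformalProduct L)
    extends IsLeftSymmetric S p : Prop where
  novikov : ∀ (j k : ZMod 2) (b c : L), b ∈ S.grade j → c ∈ S.grade k →
    ∀ (a : L) (lam mu : ℂ),
      p.mul (lam + mu) (p.mul lam a b) c = sgn j k • p.cmul mu (p.mul lam a c) b

/-- `(L, S, mc, p)` is a Novikov-Poisson conformal superalgebra. -/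
structure IsNovikovPoisson (S : SuperModule L) (mc p : ConformalProduct L) : Prop where
  commAssoc : IsCommAssoc S mc
  novikov : IsNovikov S p
  compat₁ : ∀ (lam mu : ℂ) (a b c : L),
    p.mul (lam + mu) (mc.mul lam a b) c = mc.mul lam a (p.mul mu b c)
  compat₂ : ∀ (i j : ZMod 2) (a b : L), a ∈ S.grade i → b ∈ S.grade j →
    ∀ (c : L) (lam mu : ℂ),
      mc.mul (lam + mu) (p.mul lam a b) c - p.mul lam a (mc.mul mu b c) =
        sgn i j • (mc.mul (lam + mu) (p.mul mu b a) c - p.mul mu b (mc.mul lam a c))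

/-- `(L, S, mc, p)` is a pre-Lie commutative conformal superalgebra. -/
structure IsPreLieComm (S : SuperModule L) (mc p : ConformalProduct L) : Prop where
  commAssoc : IsCommAssoc S mc
  leftSymmetric : IsLeftSymmetric S p
  compat : ∀ (i j : ZMod 2) (a b : L), a ∈ S.grade i → b ∈ S.grade j →
    ∀ (c : L) (lam mu : ℂ),
      p.mul lam a (mc.mul mu b c) =
        mc.mul (lam + mu) (p.mul lam a b) c + sgn i j • mc.mul mu b (p.mul lam a c)

/-- `(L, S, mc, p)` is a pre-Lie Poisson conformal superalgebra. -/
structure IsPreLiePoisson (S : SuperModule L) (mc p : ConformalProduct L) : Prop where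
  commAssoc : IsCommAssoc S mc
  leftSymmetric : IsLeftSymmetric S p
  compat₁ : ∀ (lam mu : ℂ) (a b c : L),
    p.mul (lam + mu) (mc.mul lam a b) c = mc.mul lam a (p.mul mu b c)
  compat₂ : ∀ (i j : ZMod 2) (a b : L), a ∈ S.grade i → b ∈ S.grade j →
    ∀ (c : L) (lam mu : ℂ),
      mc.mul (lam + mu) (p.mul lam a b) c - p.mul lam a (mc.mul mu b c) =
        sgn i j • (mc.mul (lam + mu) (p.mul mu b a) c - p.mul mu b (mc.mul lam a c))

/-! For `h, x, y` of momenta `λ, μ, ν` and `z`, write `P` for the three-term expression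
`[h x]∘[y z] - ±[h y]∘[x z] + ±[x y]∘[h z]`; the theorem is `P = 0` after skew-symmetry and
commutativity. Expanding each of its three products by the transposed Leibniz rule, in the form
`2 [b_μ c] ∘_{μ+ν} a = [b_μ (c ∘_ν a)] - ±[c_ν (b ∘_μ a)]` (which needs the substitution
`λ = -∂-μ-ν`), and regrouping with the cyclic identity `a ∘ [b c] - ±b ∘ [a c] + [a b] ∘ c = 0`
gives `2P = -[h ([x y] ∘ z)] ± [x ([h y] ∘ z)] ± [y ([h x] ∘ z)]`. The transposed Leibniz rule
turns each of these brackets back into a product of brackets, so the right-hand side is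
`-2P + [R z]` with `R` again a cyclic sum, which vanishes. Hence `4P = 0`. The super-signs are
checked by splitting on the parities. -/

lemma sgn_comm (i j : ZMod 2) : sgn i j = sgn j i := by
  rw [sgn, sgn, Nat.mul_comm]

lemma sgn_mul_self (i j : ZMod 2) : sgn i j * sgn i j = 1 := by
  rw [sgn, ← pow_add, ← two_mul, pow_mul, neg_one_sq, one_pow]

@[simp] lemma sgn_zero_left (j : ZMod 2) : sgn 0 j = 1 := by simp [sgn]

@[simp] lemma sgn_zero_right (i : ZMod 2) : sgn i 0 = 1 := by simp [sgn]

@[simp] lemma sgn_one_one : sgn 1 1 = -1 := by simp [sgn, ZMod.val_one]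

lemma zmod_two_eq_zero_or_one (i : ZMod 2) : i = 0 ∨ i = 1 := by
  revert i; decide

theorem sum_comp_smul_eq_of_forall_eval {K M ι κ : Type*} [Field K] [Infinite K]
    [AddCommGroup M] [Module K M] [Module K[X] M] [IsScalarTower K K[X] M]
    (s : Finset ι) (P : ι → K[X]) (v : ι → M) (t : Finset κ) (Q : κ → K[X]) (w : κ → M)
    (h : ∀ c : K, ∑ i ∈ s, (P i).eval c • v i = ∑ j ∈ t, (Q j).eval c • w j) (q : K[X]) :
    ∑ i ∈ s, (P i).comp q • v i = ∑ j ∈ t, (Q j).comp q • w j := by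
  have hcoeff : ∀ k, ∑ i ∈ s, (P i).coeff k • v i = ∑ j ∈ t, (Q j).coeff k • w j := by
    intro k
    rw [← sub_eq_zero, ← Module.forall_dual_apply_eq_zero_iff K]
    intro φ
    have hpoly : ∑ i ∈ s, φ (v i) • P i = ∑ j ∈ t, φ (w j) • Q j :=
      Polynomial.funext fun c => by
        simpa [Polynomial.eval_finsetSum, mul_comm] using congrArg φ (h c)
    simpa [sub_eq_zero, mul_comm] using congrArg (coeff · k) hpoly
  set N := (s.sup fun i => (P i).natDegree) ⊔ (t.sup fun j => (Q j).natDegree) + 1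
  have expand : ∀ (p : K[X]) (u : M), p.natDegree < N →
      p.comp q • u = ∑ k ∈ Finset.range N, q ^ k • p.coeff k • u := by
    intro p u hp
    rw [comp, eval₂_eq_sum_range' C hp, Finset.sum_smul]
    refine Finset.sum_congr rfl fun k _ => ?_
    rw [mul_comm, mul_smul, ← algebraMap_eq, algebraMap_smul]
  have hP : ∀ i ∈ s, (P i).natDegree < N := fun i hi =>
    Nat.lt_succ_of_le (le_sup_left.trans' (Finset.le_sup (f := fun i => (P i).natDegree) hi))
  have hQ : ∀ j ∈ t, (Q j).natDegree < N := fun j hj =>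
    Nat.lt_succ_of_le (le_sup_right.trans' (Finset.le_sup (f := fun j => (Q j).natDegree) hj))
  rw [Finset.sum_congr rfl fun i hi => expand _ _ (hP i hi),
    Finset.sum_congr rfl fun j hj => expand _ _ (hQ j hj), Finset.sum_comm,
    Finset.sum_comm (s := t)]
  simp only [← Finset.smul_sum, hcoeff]

set_option linter.unusedSectionVars false

namespace ConformalProduct

variable (p : ConformalProduct L)

lemma hasFiniteSupport_smul_coeff {R : Type*} [Semiring R] [Module R L] (c : ℕ → R) (a b : L) :
    Function.HasFiniteSupport fun n => c n • p.coeff n a b := by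
  obtain ⟨N, hN⟩ := p.coeff_finite a b
  refine (Set.finite_Iio N).subset fun n hn => ?_
  by_contra hlt
  exact hn (by simp [hN n (not_lt.1 hlt)])

lemma mul_add_left (lam : ℂ) (a a' b : L) :
    p.mul lam (a + a') b = p.mul lam a b + p.mul lam a' b := by
  simp only [mul, map_add, LinearMap.add_apply, smul_add]
  exact finsum_add_distrib (p.hasFiniteSupport_smul_coeff _ a b)
    (p.hasFiniteSupport_smul_coeff _ a' b)

lemma mul_add_right (lam : ℂ) (a b b' : L) :
    p.mul lam a (b + b') = p.mul lam a b + p.mul lam a b' := by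
  simp only [mul, map_add, smul_add]
  exact finsum_add_distrib (p.hasFiniteSupport_smul_coeff _ a b)
    (p.hasFiniteSupport_smul_coeff _ a b')

lemma mul_smul_left (lam c : ℂ) (a b : L) : p.mul lam (c • a) b = c • p.mul lam a b := by
  rw [mul, mul, smul_finsum' c (p.hasFiniteSupport_smul_coeff _ a b)]
  simp only [map_smul, LinearMap.smul_apply, smul_comm c]

lemma mul_smul_right (lam c : ℂ) (a b : L) : p.mul lam a (c • b) = c • p.mul lam a b := by
  rw [mul, mul, smul_finsum' c (p.hasFiniteSupport_smul_coeff _ a b)]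
  simp only [map_smul, smul_comm c]

def mulₗ (lam : ℂ) : L →ₗ[ℂ] L →ₗ[ℂ] L :=
  LinearMap.mk₂ ℂ (p.mul lam) (p.mul_add_left lam) (p.mul_smul_left lam) (p.mul_add_right lam)
    (p.mul_smul_right lam)

lemma mul_sub_left (lam : ℂ) (a a' b : L) :
    p.mul lam (a - a') b = p.mul lam a b - p.mul lam a' b :=
  (p.mulₗ lam).map_sub₂ a a' b

lemma mul_sub_right (lam : ℂ) (a b b' : L) :
    p.mul lam a (b - b') = p.mul lam a b - p.mul lam a b' :=
  (p.mulₗ lam a).map_sub b b'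

lemma mul_zero_left (lam : ℂ) (b : L) : p.mul lam 0 b = 0 := (p.mulₗ lam).map_zero₂ b

lemma mul_zero_right (lam : ℂ) (a : L) : p.mul lam a 0 = 0 := (p.mulₗ lam a).map_zero

lemma mul_neg_right (lam : ℂ) (a b : L) : p.mul lam a (-b) = -p.mul lam a b :=
  (p.mulₗ lam a).map_neg b

lemma mul_sum_left {ι : Type*} (s : Finset ι) (lam : ℂ) (a : ι → L) (b : L) :
    p.mul lam (∑ i ∈ s, a i) b = ∑ i ∈ s, p.mul lam (a i) b :=
  map_sum ((p.mulₗ lam).flip b) a s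

lemma mul_sum_right {ι : Type*} (s : Finset ι) (lam : ℂ) (a : L) (b : ι → L) :
    p.mul lam a (∑ i ∈ s, b i) = ∑ i ∈ s, p.mul lam a (b i) :=
  map_sum (p.mulₗ lam a) b s

variable {p} {N : ℕ} {a b : L}

lemma mul_eq_sum_range (hN : ∀ n, N ≤ n → p.coeff n a b = 0) (lam : ℂ) :
    p.mul lam a b = ∑ n ∈ Finset.range N, lam ^ n • p.coeff n a b :=
  finsum_eq_sum_of_support_subset _ fun n hn => by
    by_contra hlt
    exact hn (by simp [hN n (by simpa using hlt)])

lemma cmul_eq_sum_range (hN : ∀ n, N ≤ n → p.coeff n a b = 0) (lam : ℂ) :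
    p.cmul lam a b = ∑ n ∈ Finset.range N, (-(X + C lam)) ^ n • p.coeff n a b :=
  finsum_eq_sum_of_support_subset _ fun n hn => by
    by_contra hlt
    exact hn (by simp [hN n (by simpa using hlt)])

end ConformalProduct

lemma C_smul_eq_smul (c : ℂ) (v : L) : (C c : ℂ[X]) • v = c • v := by
  rw [← algebraMap_eq, algebraMap_smul]

variable {S : SuperModule L}

namespace IsLambdaProduct

variable {p : ConformalProduct L}

lemma mul_polynomial_smul_left (hp : IsLambdaProduct S p) (lam : ℂ) (P : ℂ[X]) (a b : L) :
    p.mul lam (P • a) b = P.eval (-lam) • p.mul lam a b := by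
  induction P using Polynomial.induction_on generalizing a with
  | C c => rw [C_smul_eq_smul, p.mul_smul_left, eval_C]
  | add P Q hP hQ => rw [add_smul, p.mul_add_left, hP, hQ, eval_add, add_smul]
  | monomial n c ih =>
    rw [pow_succ, ← mul_assoc, mul_smul, ih, hp.sesq_left, smul_smul, eval_mul (q := X), eval_X]

lemma mul_polynomial_smul_right (hp : IsLambdaProduct S p) (lam : ℂ) (P : ℂ[X]) (a b : L) :
    p.mul lam a (P • b) = P.comp (X + C lam) • p.mul lam a b := by
  induction P using Polynomial.induction_on generalizing b with
  | C c => rw [C_smul_eq_smul, p.mul_smul_right, C_comp, C_smul_eq_smul]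
  | add P Q hP hQ => rw [add_smul, p.mul_add_right, hP, hQ, add_comp, add_smul]
  | monomial n c ih =>
    rw [pow_succ, ← mul_assoc, mul_smul, ih, hp.sesq_right, ← C_smul_eq_smul lam, ← add_smul,
      smul_smul, mul_comp (q := X), X_comp]

lemma mul_mem (hp : IsLambdaProduct S p) {i j : ZMod 2} {a b : L} (ha : a ∈ S.grade i)
    (hb : b ∈ S.grade j) (lam : ℂ) : p.mul lam a b ∈ S.grade (i + j) := by
  obtain ⟨N, hN⟩ := p.coeff_finite a b
  rw [ConformalProduct.mul_eq_sum_range hN]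
  exact Submodule.sum_mem _ fun n _ => Submodule.smul_mem _ _ (hp.even i j a b ha hb n)

/-- By sesquilinearity `∂` acts on the left factor of `p.mul σ` as `-σ`. -/
lemma mul_cmul_left (hp : IsLambdaProduct S p) (m : ConformalProduct L) (σ ν : ℂ) (a b c : L) :
    p.mul σ (m.cmul ν a b) c = p.mul σ (m.mul (σ - ν) a b) c := by
  obtain ⟨N, hN⟩ := m.coeff_finite a b
  rw [ConformalProduct.cmul_eq_sum_range hN, ConformalProduct.mul_eq_sum_range hN,
    p.mul_sum_left, p.mul_sum_left]
  refine Finset.sum_congr rfl fun n _ => ?_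
  rw [hp.mul_polynomial_smul_left, p.mul_smul_left]
  simp only [eval_pow, eval_neg, eval_add, eval_X, eval_C]
  congr 2
  ring

end IsLambdaProduct

variable {m br : ConformalProduct L}

lemma IsCommAssoc.cmul_swap (hm : IsCommAssoc S m) {i j : ZMod 2} {a b : L} (ha : a ∈ S.grade i)
    (hb : b ∈ S.grade j) (lam : ℂ) : m.cmul lam b a = sgn i j • m.mul lam a b := by
  rw [hm.comm i j a b ha hb lam, smul_smul, sgn_mul_self, one_smul]

lemma IsLie.cmul_swap (hbr : IsLie S br) {i j : ZMod 2} {a b : L} (ha : a ∈ S.grade i)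
    (hb : b ∈ S.grade j) (lam : ℂ) : br.cmul lam b a = -(sgn i j • br.mul lam a b) := by
  rw [hbr.skew i j a b ha hb lam, smul_neg, neg_neg, smul_smul, sgn_mul_self, one_smul]

lemma IsCommAssoc.mul_mul_comm_left {p : ConformalProduct L} (hm : IsCommAssoc S m)
    (hp : IsLambdaProduct S p) {i j : ZMod 2} {a b : L} (ha : a ∈ S.grade i)
    (hb : b ∈ S.grade j) {ν ρ σ : ℂ} (hσ : ν + ρ = σ) (c : L) :
    p.mul σ (m.mul ν b a) c = sgn i j • p.mul σ (m.mul ρ a b) c := by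
  rw [hm.comm j i b a hb ha, p.mul_smul_left, hp.mul_cmul_left, sgn_comm, ← hσ, add_sub_cancel_left]

namespace IsTPCSA

variable (hT : IsTPCSA S m br)
include hT

lemma transposedLeibniz_comm {i j : ZMod 2} {a b : L} (ha : a ∈ S.grade i) (hb : b ∈ S.grade j)
    (c : L) (lam mu : ℂ) :
    (2 : ℂ) • m.mul lam a (br.mul mu b c) - sgn i j • br.mul mu b (m.mul lam a c) =
      sgn i j • br.mul (lam + mu) (m.mul mu b a) c := by
  rw [hT.commAssoc.mul_mul_comm_left hT.lie.toIsLambdaProduct ha hb (add_comm mu lam),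
    smul_smul, sgn_mul_self, one_smul, hT.transposedLeibniz i j a b ha hb c lam mu,
    add_sub_cancel_right]

/-- Both sides of `transposedLeibniz_comm` are polynomials in `λ` with coefficients in `L`, so the
identity survives substituting the operator `λ = -∂-μ-ν`. -/
lemma transposedLeibniz_cmul {i j : ZMod 2} {a b : L} (ha : a ∈ S.grade i)
    (hb : b ∈ S.grade j) (c : L) (mu nu : ℂ) :
    (2 : ℂ) • m.cmul (mu + nu) a (br.mul mu b c) - sgn i j • br.mul mu b (m.cmul nu a c) =
      sgn i j • br.cmul nu (m.mul mu b a) c := by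
  obtain ⟨N₁, hN₁⟩ := m.coeff_finite a (br.mul mu b c)
  obtain ⟨N₂, hN₂⟩ := m.coeff_finite a c
  obtain ⟨N₃, hN₃⟩ := br.coeff_finite (m.mul mu b a) c
  set N := max N₁ (max N₂ N₃)
  have h₁ : ∀ n, N ≤ n → m.coeff n a (br.mul mu b c) = 0 := fun n hn => hN₁ n (by omega)
  have h₂ : ∀ n, N ≤ n → m.coeff n a c = 0 := fun n hn => hN₂ n (by omega)
  have h₃ : ∀ n, N ≤ n → br.coeff n (m.mul mu b a) c = 0 := fun n hn => hN₃ n (by omega)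
  set v : ℕ → L := fun n =>
    (2 : ℂ) • m.coeff n a (br.mul mu b c) - sgn i j • br.mul mu b (m.coeff n a c)
  set w : ℕ → L := fun n => sgn i j • br.coeff n (m.mul mu b a) c
  have hpoly := sum_comp_smul_eq_of_forall_eval (Finset.range N) (fun n => X ^ n) v
    (Finset.range N) (fun n => (X + C mu) ^ n) w (fun lam => by
      have := hT.transposedLeibniz_comm ha hb c lam mu
      rw [ConformalProduct.mul_eq_sum_range h₁, ConformalProduct.mul_eq_sum_range h₂,
        ConformalProduct.mul_eq_sum_range h₃, br.mul_sum_right] at this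
      simp only [eval_pow, eval_X, eval_add, eval_C, v, w, smul_sub, Finset.sum_sub_distrib,
        Finset.smul_sum, br.mul_smul_right] at this ⊢
      simpa only [smul_comm _ (2 : ℂ), smul_comm _ (sgn i j)] using this)
    (-(X + C (mu + nu)))
  have hshift : ∀ n, (-(X + C (mu + nu))) ^ n • br.mul mu b (m.coeff n a c) =
      br.mul mu b ((-(X + C nu)) ^ n • m.coeff n a c) := fun n => by
    rw [hT.lie.mul_polynomial_smul_right, pow_comp, neg_comp, add_comp, X_comp, C_comp, C_add,
      add_assoc]
  simp only [pow_comp, add_comp, X_comp, C_comp, v, w, smul_sub,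
    Finset.sum_sub_distrib, smul_comm _ (2 : ℂ), smul_comm _ (sgn i j), ← Finset.smul_sum,
    hshift, ← br.mul_sum_right, show -(X + C (mu + nu)) + C mu = -(X + C nu) by
      rw [C_add]; ring] at hpoly
  rwa [ConformalProduct.cmul_eq_sum_range h₁, ConformalProduct.cmul_eq_sum_range h₂,
    ConformalProduct.cmul_eq_sum_range h₃]

lemma two_smul_mul_bracket_left {i j k : ZMod 2} {a b c : L} (ha : a ∈ S.grade i)
    (hb : b ∈ S.grade j) (hc : c ∈ S.grade k) (mu nu : ℂ) :
    (2 : ℂ) • m.mul (mu + nu) (br.mul mu b c) a =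
      br.mul mu b (m.mul nu c a) - sgn j k • br.mul nu c (m.mul mu b a) := by
  have h := hT.transposedLeibniz_cmul ha hb c mu nu
  rw [hT.commAssoc.cmul_swap (hT.lie.mul_mem hb hc mu) ha, hT.commAssoc.cmul_swap hc ha,
    hT.lie.cmul_swap hc (hT.commAssoc.mul_mem hb ha mu), br.mul_smul_right] at h
  linear_combination (norm := skip) sgn (j + k) i • h
  rcases zmod_two_eq_zero_or_one i with rfl | rfl <;>
    rcases zmod_two_eq_zero_or_one j with rfl | rfl <;>
    rcases zmod_two_eq_zero_or_one k with rfl | rfl <;>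
    simp only [sgn_zero_left, sgn_zero_right, sgn_one_one, add_zero, zero_add,
      CharTwo.add_self_eq_zero] <;>
    module

lemma mul_bracket_cyclic {i j k : ZMod 2} {a b c : L} (ha : a ∈ S.grade i)
    (hb : b ∈ S.grade j) (hc : c ∈ S.grade k) (lam mu : ℂ) :
    m.mul lam a (br.mul mu b c) - sgn i j • m.mul mu b (br.mul lam a c)
      + m.mul (lam + mu) (br.mul lam a b) c = 0 := by
  have hab := hT.transposedLeibniz_comm ha hb c lam mu
  have hba := hT.transposedLeibniz j i b a hb ha c mu lam
  have hcab := hT.two_smul_mul_bracket_left hc ha hb lam mu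
  rw [add_comm mu lam] at hba
  linear_combination (norm := skip)
    (1 / 2 : ℂ) • hab - (sgn i j / 2) • hba + (1 / 2 : ℂ) • hcab
  rcases zmod_two_eq_zero_or_one i with rfl | rfl <;>
    rcases zmod_two_eq_zero_or_one j with rfl | rfl <;>
    simp only [sgn_zero_left, sgn_zero_right, sgn_one_one] <;>
    module

variable {l i j k : ZMod 2} {h x y z : L} (hh : h ∈ S.grade l) (hx : x ∈ S.grade i)
  (hy : y ∈ S.grade j)
include hh hx hy

lemma bracket_bracket_mul_cyclic (z : L) (lam mu nu : ℂ) :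
    br.mul (lam + mu + nu) (m.mul (lam + mu) (br.mul lam h x) y) z
      - sgn i j • br.mul (lam + mu + nu) (m.mul (lam + nu) (br.mul lam h y) x) z
      + sgn (i + j) l • br.mul (lam + mu + nu) (m.mul (mu + nu) (br.mul mu x y) h) z = 0 := by
  have hcyc := congrArg (fun w => br.mul (lam + mu + nu) w z)
    (hT.mul_bracket_cyclic hh hx hy lam mu)
  simp only [br.mul_add_left, br.mul_sub_left, br.mul_smul_left, br.mul_zero_left] at hcyc
  rw [hT.commAssoc.mul_mul_comm_left hT.lie.toIsLambdaProduct hx (hT.lie.mul_mem hh hy lam)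
      (ρ := mu) (by ring),
    hT.commAssoc.mul_mul_comm_left hT.lie.toIsLambdaProduct hh (hT.lie.mul_mem hx hy mu)
      (ρ := lam) (by ring)]
  linear_combination (norm := skip) hcyc
  rcases zmod_two_eq_zero_or_one l with rfl | rfl <;>
    rcases zmod_two_eq_zero_or_one i with rfl | rfl <;>
    rcases zmod_two_eq_zero_or_one j with rfl | rfl <;>
    simp only [sgn_zero_left, sgn_zero_right, sgn_one_one, add_zero, zero_add,
      CharTwo.add_self_eq_zero] <;>
    module

variable (hz : z ∈ S.grade k)
include hz

lemma two_smul_mul_bracket_bracket (lam mu nu : ℂ) :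
    (2 : ℂ) • (m.mul (lam + mu) (br.mul lam h x) (br.mul nu y z)
      - sgn i j • m.mul (lam + nu) (br.mul lam h y) (br.mul mu x z)
      + sgn (i + j) l • m.mul (mu + nu) (br.mul mu x y) (br.mul lam h z)) =
    -br.mul lam h (m.mul (mu + nu) (br.mul mu x y) z)
      + sgn l i • br.mul mu x (m.mul (lam + nu) (br.mul lam h y) z)
      - (sgn i j * sgn l j) • br.mul nu y (m.mul (lam + mu) (br.mul lam h x) z) := by
  have hx' := hT.two_smul_mul_bracket_left (hT.lie.mul_mem hy hz nu) hh hx lam mu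
  have hy' := hT.two_smul_mul_bracket_left (hT.lie.mul_mem hx hz mu) hh hy lam nu
  have hz' := hT.two_smul_mul_bracket_left (hT.lie.mul_mem hh hz lam) hx hy mu nu
  have hcx := congrArg (br.mul lam h) (hT.mul_bracket_cyclic hx hy hz mu nu)
  have hcy := congrArg (br.mul mu x) (hT.mul_bracket_cyclic hh hy hz lam nu)
  have hcz := congrArg (br.mul nu y) (hT.mul_bracket_cyclic hh hx hz lam mu)
  simp only [br.mul_add_right, br.mul_sub_right, br.mul_smul_right, br.mul_zero_right]
    at hcx hcy hcz
  linear_combination (norm := skip) hx' - sgn i j • hy' + sgn (i + j) l • hz' + hcx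
    - sgn l i • hcy + (sgn i j * sgn l j) • hcz
  rcases zmod_two_eq_zero_or_one l with rfl | rfl <;>
    rcases zmod_two_eq_zero_or_one i with rfl | rfl <;>
    rcases zmod_two_eq_zero_or_one j with rfl | rfl <;>
    simp only [sgn_zero_left, sgn_zero_right, sgn_one_one, add_zero, zero_add,
      CharTwo.add_self_eq_zero] <;>
    module

lemma mul_bracket_bracket_cyclic (lam mu nu : ℂ) :
    m.mul (lam + mu) (br.mul lam h x) (br.mul nu y z)
      - sgn i j • m.mul (lam + nu) (br.mul lam h y) (br.mul mu x z)
      + sgn (i + j) l • m.mul (mu + nu) (br.mul mu x y) (br.mul lam h z) = 0 := by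
  have h2 := hT.two_smul_mul_bracket_bracket hh hx hy hz lam mu nu
  have hx' := hT.transposedLeibniz (l + i) j _ y (hT.lie.mul_mem hh hx lam) hy z (lam + mu) nu
  have hy' := hT.transposedLeibniz (l + j) i _ x (hT.lie.mul_mem hh hy lam) hx z (lam + nu) mu
  have hz' := hT.transposedLeibniz (i + j) l _ h (hT.lie.mul_mem hx hy mu) hh z (mu + nu) lam
  rw [show lam + nu + mu = lam + mu + nu by ring] at hy'
  rw [show mu + nu + lam = lam + mu + nu by ring] at hz'
  linear_combination (norm := skip) (1 / 4 : ℂ) • (h2 + hx' - sgn i j • hy' + sgn (i + j) l • hz'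
    + hT.bracket_bracket_mul_cyclic hh hx hy z lam mu nu)
  rcases zmod_two_eq_zero_or_one l with rfl | rfl <;>
    rcases zmod_two_eq_zero_or_one i with rfl | rfl <;>
    rcases zmod_two_eq_zero_or_one j with rfl | rfl <;>
    simp only [sgn_zero_left, sgn_zero_right, sgn_one_one, add_zero, zero_add,
      CharTwo.add_self_eq_zero] <;>
    module

end IsTPCSA

/-- the identity (3.18) in a transposed Poisson conformal superalgebra. -/
theorem statement_4 (S : SuperModule L) (m br : ConformalProduct L)
    (hT : IsTPCSA S m br) (l i j k : ZMod 2) (h x y z : L)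
    (hh : h ∈ S.grade l) (hx : x ∈ S.grade i) (hy : y ∈ S.grade j) (hz : z ∈ S.grade k)
    (lam mu gam : ℂ) :
    sgn i k • m.mul (lam + gam) (br.mul lam h x) (br.mul (mu - gam) y z)
      + sgn i j • m.mul (lam + mu - gam) (br.mul lam h y) (br.cmul gam z x)
      + sgn j k • m.cmul mu (br.mul lam h z) (br.mul gam x y) = 0 := by
  have hcyc := hT.mul_bracket_bracket_cyclic hh hx hy hz lam gam (mu - gam)
  rw [show lam + (mu - gam) = lam + mu - gam by ring, show gam + (mu - gam) = mu by ring] at hcyc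
  rw [hT.lie.cmul_swap hx hz, m.mul_neg_right, m.mul_smul_right,
    hT.commAssoc.cmul_swap (hT.lie.mul_mem hx hy gam) (hT.lie.mul_mem hh hz lam)]
  linear_combination (norm := skip) sgn i k • hcyc
  rcases zmod_two_eq_zero_or_one l with rfl | rfl <;>
    rcases zmod_two_eq_zero_or_one i with rfl | rfl <;>
    rcases zmod_two_eq_zero_or_one j with rfl | rfl <;>
    rcases zmod_two_eq_zero_or_one k with rfl | rfl <;>
    simp only [sgn_zero_left, sgn_zero_right, sgn_one_one, add_zero, zero_add,
      CharTwo.add_self_eq_zero] <;>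
    module

end TPCSAFormal
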